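/- arXiv:2103.11050 — 2 statements merged into one kernel-verified Lean document; each statement's English description precedes it below -/
import Mathlib

section
/- Let Ω ⊆ ℝ² be open, let κ, κ_ε : ℝ² → ℝ, ε ∈ ℝ, and L ∈ ℕ. Let p^m : ℝ² → ℝ and δp_0, …, δp_L : ℝ² → ℝ be differentiable at every point of Ω, and let u^m, δu_0, …, δu_L : ℝ² → ℝ² be vector fields. Assume that on Ω: u^m + δu_0 + (κ + ε·κ_ε)·∇p^m = −κ·∇δp_0, and for each ℓ = 1, …, L: δu_ℓ + κ_ε·∇δp_{ℓ−1} = −κ·∇δp_ℓ. Define δp := Σ_{ℓ=0}^{L} ε^ℓ·δp_ℓ and δu := Σ_{ℓ=0}^{L} ε^ℓ·δu_ℓ. Then at every point of Ω, u^m + δu + (κ + ε·κ_ε)·∇p^m = −(κ + ε·κ_ε)·∇δp + ε^{L+1}·κ_ε·∇δp_L; that is, the truncated perturbation expansion satisfies the Darcy relation of the auxiliary problem up to a residual of size ε^{L+1}. -/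
/-!
The gradient is linear, so `∇δp = ∑ ε^ℓ ∇δp_ℓ`. Multiplying the order-`ℓ` Darcy relation by `ε^ℓ`
and summing, the term `ε^ℓ κ_ε ∇δp_{ℓ-1}` of order `ℓ` cancels against the `ε · ε^{ℓ-1} κ_ε ∇δp_{ℓ-1}`
part of `(κ + ε κ_ε) ∇δp`, so the sum telescopes down to the single residual `ε^{L+1} κ_ε ∇δp_L`.
-/

open Finset

section Gradient

variable {ι F : Type*} [NormedAddCommGroup F] [InnerProductSpace ℝ F] [CompleteSpace F]
  {s : Finset ι} {c : ι → ℝ} {f : ι → F → ℝ} {x : F}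

theorem hasGradientAt_sum_const_mul (hf : ∀ i ∈ s, DifferentiableAt ℝ (f i) x) :
    HasGradientAt (fun y => ∑ i ∈ s, c i * f i y) (∑ i ∈ s, c i • gradient (f i) x) x := by
  rw [hasGradientAt_iff_hasFDerivAt, map_sum]
  refine HasFDerivAt.fun_sum fun i hi => ?_
  rw [LinearIsometryEquiv.map_smul]
  exact (hf i hi).hasGradientAt.hasFDerivAt.const_smul (c i)

theorem gradient_sum_const_mul (hf : ∀ i ∈ s, DifferentiableAt ℝ (f i) x) :
    gradient (fun y => ∑ i ∈ s, c i * f i y) x = ∑ i ∈ s, c i • gradient (f i) x :=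
  (hasGradientAt_sum_const_mul hf).gradient

end Gradient

/-- `U ℓ`, `G ℓ`, `a`, `b`, `Gpm` play the roles of `δu_ℓ`, `∇δp_ℓ`, `κ`, `κ_ε`, `∇pᵐ` at a point. -/
theorem truncated_expansion_residual {V : Type*} [AddCommGroup V] [Module ℝ V]
    (a b ε : ℝ) (um Gpm : V) (G U : ℕ → V) (L : ℕ)
    (h0 : um + U 0 + (a + ε * b) • Gpm = -(a • G 0))
    (hℓ : ∀ ℓ, 1 ≤ ℓ → ℓ ≤ L → U ℓ + b • G (ℓ - 1) = -(a • G ℓ)) :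
    um + (∑ ℓ ∈ range (L + 1), ε ^ ℓ • U ℓ) + (a + ε * b) • Gpm =
      -((a + ε * b) • ∑ ℓ ∈ range (L + 1), ε ^ ℓ • G ℓ) + ε ^ (L + 1) • (b • G L) := by
  induction L with
  | zero =>
    simp only [zero_add, sum_range_one, pow_zero, one_smul, pow_one]
    linear_combination (norm := module) h0
  | succ n ih =>
    have hU : U (n + 1) + b • G n = -(a • G (n + 1)) := hℓ (n + 1) (Nat.le_add_left 1 n) le_rfl
    have ih := ih fun ℓ h1 h2 => hℓ ℓ h1 (h2.trans n.le_succ)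
    rw [sum_range_succ, sum_range_succ _ (n + 1)]
    linear_combination (norm := module) ih + ε ^ (n + 1) • hU

theorem truncated_expansion_darcy_general
    (Ω : Set (EuclideanSpace ℝ (Fin 2)))
    (κ κε : EuclideanSpace ℝ (Fin 2) → ℝ) (ε : ℝ) (L : ℕ)
    (pm : EuclideanSpace ℝ (Fin 2) → ℝ)
    (δp : ℕ → EuclideanSpace ℝ (Fin 2) → ℝ)
    (um : EuclideanSpace ℝ (Fin 2) → EuclideanSpace ℝ (Fin 2))
    (δu : ℕ → EuclideanSpace ℝ (Fin 2) → EuclideanSpace ℝ (Fin 2))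
    (hδp : ∀ ℓ ≤ L, ∀ x ∈ Ω, DifferentiableAt ℝ (δp ℓ) x)
    (h0 : ∀ x ∈ Ω,
      um x + δu 0 x + (κ x + ε * κε x) • gradient pm x =
        -(κ x • gradient (δp 0) x))
    (hℓ : ∀ ℓ, 1 ≤ ℓ → ℓ ≤ L → ∀ x ∈ Ω,
      δu ℓ x + κε x • gradient (δp (ℓ - 1)) x = -(κ x • gradient (δp ℓ) x)) :
    ∀ x ∈ Ω,
      um x + (∑ ℓ ∈ Finset.range (L + 1), ε ^ ℓ • δu ℓ x) +
          (κ x + ε * κε x) • gradient pm x =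
        -((κ x + ε * κε x) •
            gradient (fun y => ∑ ℓ ∈ Finset.range (L + 1), ε ^ ℓ * δp ℓ y) x) +
          ε ^ (L + 1) • (κε x • gradient (δp L) x) := by
  intro x hx
  rw [gradient_sum_const_mul fun ℓ hℓL => hδp ℓ (Nat.lt_succ_iff.mp (mem_range.mp hℓL)) x hx]
  exact truncated_expansion_residual (κ x) (κε x) ε (um x) (gradient pm x)
    (fun ℓ => gradient (δp ℓ) x) (fun ℓ => δu ℓ x) L (h0 x hx) fun ℓ h1 h2 => hℓ ℓ h1 h2 x hx

/-- If the order-0 term of the perturbation expansion satisfies the Darcy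
relation of 𝒫_{û₀} and each order-ℓ term (1 ≤ ℓ ≤ L) satisfies the Darcy relation of
𝒫_{û_ℓ}, then the truncated expansions δp = Σ_{ℓ≤L} ε^ℓ δp_ℓ, δu = Σ_{ℓ≤L} ε^ℓ δu_ℓ
satisfy the Darcy relation of the auxiliary problem up to a residual of size ε^{L+1}. -/
theorem truncated_expansion_darcy
    (Ω : Set (EuclideanSpace ℝ (Fin 2))) (hΩ : IsOpen Ω)
    (κ κε : EuclideanSpace ℝ (Fin 2) → ℝ) (ε : ℝ) (L : ℕ)
    (pm : EuclideanSpace ℝ (Fin 2) → ℝ)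
    (δp : ℕ → EuclideanSpace ℝ (Fin 2) → ℝ)
    (um : EuclideanSpace ℝ (Fin 2) → EuclideanSpace ℝ (Fin 2))
    (δu : ℕ → EuclideanSpace ℝ (Fin 2) → EuclideanSpace ℝ (Fin 2))
    (hpm : ∀ x ∈ Ω, DifferentiableAt ℝ pm x)
    (hδp : ∀ ℓ ≤ L, ∀ x ∈ Ω, DifferentiableAt ℝ (δp ℓ) x)
    (h0 : ∀ x ∈ Ω,
      um x + δu 0 x + (κ x + ε * κε x) • gradient pm x =
        -(κ x • gradient (δp 0) x))
    (hℓ : ∀ ℓ, 1 ≤ ℓ → ℓ ≤ L → ∀ x ∈ Ω,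
      δu ℓ x + κε x • gradient (δp (ℓ - 1)) x = -(κ x • gradient (δp ℓ) x)) :
    ∀ x ∈ Ω,
      um x + (∑ ℓ ∈ Finset.range (L + 1), ε ^ ℓ • δu ℓ x) +
          (κ x + ε * κε x) • gradient pm x =
        -((κ x + ε * κε x) •
            gradient (fun y => ∑ ℓ ∈ Finset.range (L + 1), ε ^ ℓ * δp ℓ y) x) +
          ε ^ (L + 1) • (κε x • gradient (δp L) x) :=
  truncated_expansion_darcy_general Ω κ κε ε L pm δp um δu hδp h0 hℓ
end

section
/- Let Ω ⊆ ℝ² be open, let κ, κ_ε, q : ℝ² → ℝ, ε ∈ ℝ, and L ∈ ℕ. Let p^m : ℝ² → ℝ and δp_0, …, δp_L : ℝ² → ℝ be differentiable at every point of Ω, and let u^m, δu_0, …, δu_L : ℝ² → ℝ² be vector fields. Define w := (κ + ε·κ_ε)·∇p^m and, for 1 ≤ ℓ ≤ L, v_ℓ := κ_ε·∇δp_{ℓ−1}. Assume that u^m, w, each δu_ℓ (0 ≤ ℓ ≤ L), and each v_ℓ (1 ≤ ℓ ≤ L) are differentiable at every point of Ω, and that on Ω: ∇·u^m = q, ∇·(u^m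 + δu_0 + w) = q + ∇·w, and ∇·(δu_ℓ + v_ℓ) = ∇·v_ℓ for each ℓ = 1, …, L. Then ∇·(u^m + Σ_{ℓ=0}^{L} ε^ℓ·δu_ℓ) = q at every point of Ω; that is, the truncated perturbation expansion conserves mass exactly. -/
/-! Divergence is linear on fields differentiable at the point. Subtracting `∇·uᵐ = q` from the
order-0 equation gives `∇·δu₀ = 0`, and each order-ℓ equation gives `∇·δu_ℓ = 0`; hence the
truncated expansion has divergence `∇·uᵐ + Σ ε^ℓ ∇·δu_ℓ = q`. -/

noncomputable section

/-- The divergence of a vector field on ℝ², i.e. the trace of its Fréchet derivative. -/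
def div2 (u : EuclideanSpace ℝ (Fin 2) → EuclideanSpace ℝ (Fin 2))
    (x : EuclideanSpace ℝ (Fin 2)) : ℝ :=
  LinearMap.trace ℝ (EuclideanSpace ℝ (Fin 2)) (fderiv ℝ u x).toLinearMap

section Divergence

variable {u v : EuclideanSpace ℝ (Fin 2) → EuclideanSpace ℝ (Fin 2)}
  {x : EuclideanSpace ℝ (Fin 2)}

lemma div2_add (hu : DifferentiableAt ℝ u x) (hv : DifferentiableAt ℝ v x) :
    div2 (fun y => u y + v y) x = div2 u x + div2 v x := by
  simp only [div2, fderiv_fun_add hu hv, ContinuousLinearMap.toLinearMap_add, map_add]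

lemma div2_const_smul (c : ℝ) (hu : DifferentiableAt ℝ u x) :
    div2 (fun y => c • u y) x = c * div2 u x := by
  simp only [div2, fderiv_fun_const_smul hu, ContinuousLinearMap.toLinearMap_smul, map_smul,
    smul_eq_mul]

lemma div2_sum {ι : Type*} (s : Finset ι)
    {f : ι → EuclideanSpace ℝ (Fin 2) → EuclideanSpace ℝ (Fin 2)}
    (hf : ∀ i ∈ s, DifferentiableAt ℝ (f i) x) :
    div2 (fun y => ∑ i ∈ s, f i y) x = ∑ i ∈ s, div2 (f i) x := by
  simp only [div2, fderiv_fun_sum hf, ContinuousLinearMap.toLinearMap_sum, map_sum]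

lemma div2_eq_zero_of_div2_add_eq (hu : DifferentiableAt ℝ u x) (hv : DifferentiableAt ℝ v x)
    (h : div2 (fun y => u y + v y) x = div2 v x) : div2 u x = 0 := by
  rw [div2_add hu hv] at h
  linarith

end Divergence

theorem truncated_expansion_mass_conservation_general
    (Ω : Set (EuclideanSpace ℝ (Fin 2)))
    (q : EuclideanSpace ℝ (Fin 2) → ℝ) (ε : ℝ) (L : ℕ)
    (um : EuclideanSpace ℝ (Fin 2) → EuclideanSpace ℝ (Fin 2))
    (δu : ℕ → EuclideanSpace ℝ (Fin 2) → EuclideanSpace ℝ (Fin 2))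
    (w : EuclideanSpace ℝ (Fin 2) → EuclideanSpace ℝ (Fin 2))
    (v : ℕ → EuclideanSpace ℝ (Fin 2) → EuclideanSpace ℝ (Fin 2))
    (hum : ∀ x ∈ Ω, DifferentiableAt ℝ um x)
    (hwdiff : ∀ x ∈ Ω, DifferentiableAt ℝ w x)
    (hδu : ∀ ℓ ≤ L, ∀ x ∈ Ω, DifferentiableAt ℝ (δu ℓ) x)
    (hvdiff : ∀ ℓ, 1 ≤ ℓ → ℓ ≤ L → ∀ x ∈ Ω, DifferentiableAt ℝ (v ℓ) x)
    (hdivum : ∀ x ∈ Ω, div2 um x = q x)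
    (h0 : ∀ x ∈ Ω,
      div2 (fun y => um y + δu 0 y + w y) x = q x + div2 w x)
    (hℓ : ∀ ℓ, 1 ≤ ℓ → ℓ ≤ L → ∀ x ∈ Ω,
      div2 (fun y => δu ℓ y + v ℓ y) x = div2 (v ℓ) x) :
    ∀ x ∈ Ω,
      div2 (fun y => um y + ∑ ℓ ∈ Finset.range (L + 1), ε ^ ℓ • δu ℓ y) x = q x := by
  intro x hx
  have hδu_mem : ∀ ℓ ∈ Finset.range (L + 1), DifferentiableAt ℝ (δu ℓ) x :=
    fun ℓ hmem => hδu ℓ (Finset.mem_range_succ_iff.mp hmem) x hx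
  have hdiv_δu : ∀ ℓ ∈ Finset.range (L + 1), div2 (δu ℓ) x = 0 := by
    intro ℓ hmem
    rcases Nat.eq_zero_or_pos ℓ with rfl | hpos
    · have h := h0 x hx
      rw [div2_add ((hum x hx).fun_add (hδu_mem 0 hmem)) (hwdiff x hx),
        div2_add (hum x hx) (hδu_mem 0 hmem), hdivum x hx] at h
      linarith
    · have hle := Finset.mem_range_succ_iff.mp hmem
      exact div2_eq_zero_of_div2_add_eq (hδu_mem ℓ hmem) (hvdiff ℓ hpos hle x hx)
        (hℓ ℓ hpos hle x hx)
  have hterm_diff : ∀ ℓ ∈ Finset.range (L + 1),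
      DifferentiableAt ℝ (fun y => ε ^ ℓ • δu ℓ y) x :=
    fun ℓ hmem => (hδu_mem ℓ hmem).fun_const_smul _
  have hterm_div : ∀ ℓ ∈ Finset.range (L + 1), div2 (fun y => ε ^ ℓ • δu ℓ y) x = 0 :=
    fun ℓ hmem => by rw [div2_const_smul _ (hδu_mem ℓ hmem), hdiv_δu ℓ hmem, mul_zero]
  rw [div2_add (hum x hx) (DifferentiableAt.fun_sum hterm_diff), div2_sum _ hterm_diff,
    Finset.sum_eq_zero hterm_div, hdivum x hx, add_zero]

/-- If ∇·uᵐ = q, the order-0 term of the perturbation expansion satisfies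
the divergence equation of 𝒫_{û₀}, and each order-ℓ term (1 ≤ ℓ ≤ L) satisfies the
divergence equation of 𝒫_{û_ℓ}, then the truncated expansion
uᵐ + Σ_{ℓ≤L} ε^ℓ δu_ℓ conserves mass exactly: its divergence equals q on Ω. -/
theorem truncated_expansion_mass_conservation
    (Ω : Set (EuclideanSpace ℝ (Fin 2))) (hΩ : IsOpen Ω)
    (κ κε q : EuclideanSpace ℝ (Fin 2) → ℝ) (ε : ℝ) (L : ℕ)
    (pm : EuclideanSpace ℝ (Fin 2) → ℝ)
    (δp : ℕ → EuclideanSpace ℝ (Fin 2) → ℝ)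
    (um : EuclideanSpace ℝ (Fin 2) → EuclideanSpace ℝ (Fin 2))
    (δu : ℕ → EuclideanSpace ℝ (Fin 2) → EuclideanSpace ℝ (Fin 2))
    (hpm : ∀ x ∈ Ω, DifferentiableAt ℝ pm x)
    (hδp : ∀ ℓ ≤ L, ∀ x ∈ Ω, DifferentiableAt ℝ (δp ℓ) x)
    (w : EuclideanSpace ℝ (Fin 2) → EuclideanSpace ℝ (Fin 2))
    (hw : ∀ x, w x = (κ x + ε * κε x) • gradient pm x)
    (v : ℕ → EuclideanSpace ℝ (Fin 2) → EuclideanSpace ℝ (Fin 2))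
    (hv : ∀ ℓ, 1 ≤ ℓ → ℓ ≤ L → ∀ x, v ℓ x = κε x • gradient (δp (ℓ - 1)) x)
    (hum : ∀ x ∈ Ω, DifferentiableAt ℝ um x)
    (hwdiff : ∀ x ∈ Ω, DifferentiableAt ℝ w x)
    (hδu : ∀ ℓ ≤ L, ∀ x ∈ Ω, DifferentiableAt ℝ (δu ℓ) x)
    (hvdiff : ∀ ℓ, 1 ≤ ℓ → ℓ ≤ L → ∀ x ∈ Ω, DifferentiableAt ℝ (v ℓ) x)
    (hdivum : ∀ x ∈ Ω, div2 um x = q x)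
    (h0 : ∀ x ∈ Ω,
      div2 (fun y => um y + δu 0 y + w y) x = q x + div2 w x)
    (hℓ : ∀ ℓ, 1 ≤ ℓ → ℓ ≤ L → ∀ x ∈ Ω,
      div2 (fun y => δu ℓ y + v ℓ y) x = div2 (v ℓ) x) :
    ∀ x ∈ Ω,
      div2 (fun y => um y + ∑ ℓ ∈ Finset.range (L + 1), ε ^ ℓ • δu ℓ y) x = q x :=
  truncated_expansion_mass_conservation_general Ω q ε L um δu w v hum hwdiff hδu hvdiff hdivum h0 hℓ

end
end
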